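/- Let q ≥ 1, n ≥ 1, let G be a real q×n matrix, let X ⊆ ℝⁿ be a nonempty compact convex set, and define Γ(x) = (Gx, −eᵀGx), Y := {Gx : x ∈ X}, P := Γ[X] + ℝ₊^{q+1}, and H := {y ∈ ℝ^{q+1} : eᵀy = 0}. Let ε > 0 and let P_outer ⊆ ℝ^{q+1} satisfy P ⊆ P_outer and P_outer + {εe} ⊆ P, and set Y_outer := π[P_outer ∩ H]. Then Y ⊆ Y_outer and d_H(Y_outer, Y) ≤ ε√(q² + q − 1). -/

import Mathlib

noncomputable section
open Pointwise

def euc {m : ℕ} (x : Fin m → ℝ) : EuclideanSpace ℝ (Fin m) := WithLp.toLp 2 x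

def Gam {q n : ℕ} (G : Matrix (Fin q) (Fin n) ℝ) (x : Fin n → ℝ) :
    EuclideanSpace ℝ (Fin (q + 1)) :=
  euc (Fin.snoc (G.mulVec x) (-(∑ j, G.mulVec x j)))

def orth (m : ℕ) : Set (EuclideanSpace ℝ (Fin m)) := {y | ∀ i, 0 ≤ y i}

def hyp (q : ℕ) : Set (EuclideanSpace ℝ (Fin (q + 1))) := {y | ∑ i, y i = 0}

def proj {q : ℕ} (y : EuclideanSpace ℝ (Fin (q + 1))) : EuclideanSpace ℝ (Fin q) :=
  euc (fun i => y i.castSucc)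

def phi {q : ℕ} (y ys : EuclideanSpace ℝ (Fin (q + 1))) : ℝ :=
  (∑ i : Fin q, y i.castSucc * ys i.castSucc) +
    y (Fin.last q) * (1 - ∑ i : Fin q, ys i.castSucc) - ys (Fin.last q)

/-!
A point `y ∈ P_outer ∩ H` satisfies `y + εe = Γ(x) + c` for some `x ∈ X` and `c ≥ 0`. Both `y` and
`Γ(x)` lie in `H`, so `∑ cᵢ = (q + 1)ε`, and `π(y) - Gx = (cᵢ - ε)_{i < q}`. Bounding
`∑_{i<q} cᵢ² ≤ s²` with `s = ∑_{i<q} cᵢ ∈ [0, (q + 1)ε]`, the squared distance is at most a convex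
function of `s`, whose value `ε²(q² + q - 1)` at `s = (q + 1)ε` dominates its value `qε²` at `s = 0`
because `q ≥ 1`.
-/

open Matrix

lemma sum_sub_sq_le_of_sum_le {ι : Type*} [Fintype ι] (hι : 1 ≤ Fintype.card ι)
    {ε : ℝ} (c : ι → ℝ) (hc : ∀ i, 0 ≤ c i)
    (hsum : ∑ i, c i ≤ (Fintype.card ι + 1) * ε) :
    ∑ i, (c i - ε) ^ 2 ≤ ε ^ 2 * ((Fintype.card ι : ℝ) ^ 2 + Fintype.card ι - 1) := by
  have hq : (1 : ℝ) ≤ Fintype.card ι := by exact_mod_cast hι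
  set q : ℝ := (Fintype.card ι : ℝ)
  set s : ℝ := ∑ i, c i
  have hsq : ∑ i, c i ^ 2 ≤ s ^ 2 := Finset.sum_sq_le_sq_sum_of_nonneg fun i _ => hc i
  have hs : 0 ≤ s := Finset.sum_nonneg fun i _ => hc i
  have hε : 0 ≤ ε := nonneg_of_mul_nonneg_right (hs.trans hsum) (by positivity)
  have hexpand : ∑ i, (c i - ε) ^ 2 = ∑ i, c i ^ 2 - 2 * ε * s + q * ε ^ 2 := by
    simp only [sub_sq, Finset.sum_add_distrib, Finset.sum_sub_distrib, ← Finset.sum_mul,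
      ← Finset.mul_sum, Finset.sum_const, Finset.card_univ, nsmul_eq_mul, s, q]
    ring
  rw [hexpand]
  nlinarith [mul_nonneg (sub_nonneg.2 hsum) (by nlinarith : 0 ≤ s + (q - 1) * ε)]

lemma Gam_mem_hyp {q n : ℕ} (G : Matrix (Fin q) (Fin n) ℝ) (x : Fin n → ℝ) :
    Gam G x ∈ hyp q := by
  simp [hyp, Gam, euc, Fin.sum_univ_castSucc]

lemma proj_Gam {q n : ℕ} (G : Matrix (Fin q) (Fin n) ℝ) (x : Fin n → ℝ) :
    proj (Gam G x) = euc (G *ᵥ x) := by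
  ext i
  simp [proj, Gam, euc]

lemma image_mulVec_subset_proj {q n : ℕ} (G : Matrix (Fin q) (Fin n) ℝ) (X : Set (Fin n → ℝ))
    {Pouter : Set (EuclideanSpace ℝ (Fin (q + 1)))} (h1 : Gam G '' X + orth (q + 1) ⊆ Pouter) :
    (fun x => euc (G *ᵥ x)) '' X ⊆ proj '' (Pouter ∩ hyp q) := by
  rintro _ ⟨x, hx, rfl⟩
  have hP : Gam G x ∈ Gam G '' X + orth (q + 1) :=
    ⟨Gam G x, ⟨x, hx, rfl⟩, 0, fun _ => le_rfl, add_zero _⟩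
  exact ⟨Gam G x, ⟨h1 hP, Gam_mem_hyp G x⟩, proj_Gam G x⟩

lemma exists_dist_proj_le {q n : ℕ} (hq : 1 ≤ q) (G : Matrix (Fin q) (Fin n) ℝ)
    (X : Set (Fin n → ℝ)) {ε : ℝ} {Pouter : Set (EuclideanSpace ℝ (Fin (q + 1)))}
    (h2 : Pouter + {euc fun _ => ε} ⊆ Gam G '' X + orth (q + 1))
    {y : EuclideanSpace ℝ (Fin (q + 1))} (hyP : y ∈ Pouter) (hyH : y ∈ hyp q) :
    ∃ x ∈ X, dist (proj y) (euc (G *ᵥ x)) ≤ ε * √((q : ℝ) ^ 2 + q - 1) := by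
  obtain ⟨-, ⟨x, hx, rfl⟩, c, hc, heq⟩ := h2 (Set.add_mem_add hyP rfl)
  have hcoord : ∀ i, Gam G x i + c i = y i + ε := fun i => congrArg (· i) heq
  have hcsum : ∑ i, c i = (q + 1) * ε := by
    have := Finset.sum_congr rfl fun i (_ : i ∈ Finset.univ) => hcoord i
    rw [Finset.sum_add_distrib, Finset.sum_add_distrib, Gam_mem_hyp G x, hyH] at this
    simpa using this
  have hε : 0 ≤ ε :=
    nonneg_of_mul_nonneg_right ((Finset.sum_nonneg fun i _ => hc i).trans hcsum.le) (by positivity)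
  have hdiff : ∀ i : Fin q, proj y i - (G *ᵥ x) i = c i.castSucc - ε := by
    intro i
    have := hcoord i.castSucc
    simp only [Gam, euc, PiLp.toLp_apply, Fin.snoc_castSucc] at this
    simp only [proj, euc, PiLp.toLp_apply]
    linarith
  have hcsum_castSucc : ∑ i : Fin q, c i.castSucc ≤ (q + 1) * ε := by
    rw [Fin.sum_univ_castSucc] at hcsum
    linarith [hc (Fin.last q)]
  have hbound := sum_sub_sq_le_of_sum_le (by simpa using hq) (fun i : Fin q => c i.castSucc)
    (fun i => hc _) (by simpa using hcsum_castSucc)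
  simp only [Fintype.card_fin] at hbound
  refine ⟨x, hx, ?_⟩
  calc dist (proj y) (euc (G *ᵥ x))
      = √(∑ i : Fin q, (c i.castSucc - ε) ^ 2) := by
        simp only [EuclideanSpace.dist_eq, Real.dist_eq, sq_abs, ← hdiff]
        rfl
    _ ≤ √(ε ^ 2 * ((q : ℝ) ^ 2 + q - 1)) := Real.sqrt_le_sqrt hbound
    _ = ε * √((q : ℝ) ^ 2 + q - 1) := by rw [Real.sqrt_mul (sq_nonneg ε), Real.sqrt_sq hε]

theorem stmt_7_general (q n : ℕ) (hq : 1 ≤ q)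
    (G : Matrix (Fin q) (Fin n) ℝ) (X : Set (Fin n → ℝ))
    (ε : ℝ) (hε : 0 < ε)
    (Pouter : Set (EuclideanSpace ℝ (Fin (q + 1))))
    (h1 : (Gam G '' X) + orth (q + 1) ⊆ Pouter)
    (h2 : Pouter + {euc fun _ => ε} ⊆ (Gam G '' X) + orth (q + 1)) :
    (fun x => euc (G.mulVec x)) '' X ⊆ proj '' (Pouter ∩ hyp q) ∧
    Metric.hausdorffDist (proj '' (Pouter ∩ hyp q)) ((fun x => euc (G.mulVec x)) '' X)
      ≤ ε * Real.sqrt ((q : ℝ) ^ 2 + q - 1) := by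
  have hr : 0 ≤ ε * √((q : ℝ) ^ 2 + q - 1) := by positivity
  have hsub := image_mulVec_subset_proj G X h1
  refine ⟨hsub, Metric.hausdorffDist_le_of_infDist hr ?_ ?_⟩
  · rintro _ ⟨y, ⟨hyP, hyH⟩, rfl⟩
    obtain ⟨x, hx, hdist⟩ := exists_dist_proj_le hq G X h2 hyP hyH
    exact (Metric.infDist_le_dist_of_mem (Set.mem_image_of_mem _ hx)).trans hdist
  · intro z hz
    rw [Metric.infDist_zero_of_mem (hsub hz)]
    exact hr

/-- error bound for (CPP) via the primal Benson algorithm. -/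
theorem stmt_7 (q n : ℕ) (hq : 1 ≤ q) (hn : 1 ≤ n)
    (G : Matrix (Fin q) (Fin n) ℝ) (X : Set (Fin n → ℝ))
    (hX : X.Nonempty) (hXc : IsCompact X) (hXconv : Convex ℝ X)
    (ε : ℝ) (hε : 0 < ε)
    (Pouter : Set (EuclideanSpace ℝ (Fin (q + 1))))
    (h1 : (Gam G '' X) + orth (q + 1) ⊆ Pouter)
    (h2 : Pouter + {euc fun _ => ε} ⊆ (Gam G '' X) + orth (q + 1)) :
    (fun x => euc (G.mulVec x)) '' X ⊆ proj '' (Pouter ∩ hyp q) ∧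
    Metric.hausdorffDist (proj '' (Pouter ∩ hyp q)) ((fun x => euc (G.mulVec x)) '' X)
      ≤ ε * Real.sqrt ((q : ℝ) ^ 2 + q - 1) :=
  stmt_7_general q n hq G X ε hε Pouter h1 h2
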